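/- arXiv:1705.11025 — 5 statements merged into one kernel-verified Lean document; each statement's English description precedes it below -/
import Mathlib

section
/- Let N ≥ 1 and let P and B be N×N positive definite hermitian complex matrices. Suppose A is an N×N hermitian complex matrix and c ∈ ℂ is such that (Bᵀ)⁻¹AᵀP + PAᵀ(Bᵀ)⁻¹ = c·P. Then c is real and A = (c/2)·B; in particular, if the hermitian matrix (Bᵀ)⁻¹AᵀP + PAᵀ(Bᵀ)⁻¹ is a scalar multiple of P, then A is a real scalar multiple of B. -/
open Matrix
open scoped ComplexOrder

lemma trace_conjTranspose_mul_self_eq_zero' {n : Type*} [Fintype n] [DecidableEq n]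
    {M : Matrix n n ℂ} (h : (Mᴴ * M).trace = 0) : M = 0 := by
  have hdiag : ∀ j, (Mᴴ * M) j j = dotProduct (star (fun i => M i j)) (fun i => M i j) := by
    intro j
    simp [Matrix.mul_apply, dotProduct, Matrix.conjTranspose_apply]
  have h' : ∑ j, (Mᴴ * M) j j = 0 := h
  have h0 : ∀ j ∈ Finset.univ, (Mᴴ * M) j j = 0 := by
    refine (Finset.sum_eq_zero_iff_of_nonneg ?_).mp h'
    intro j _
    rw [hdiag j]
    exact dotProduct_star_self_nonneg _
  ext i j
  have h1 := h0 j (Finset.mem_univ j)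
  rw [hdiag j] at h1
  have h2 := dotProduct_star_self_eq_zero.mp h1
  exact congrFun h2 i

/-- If `P` and `B` are positive definite hermitian matrices, `A` is hermitian, and
`(Bᵀ)⁻¹AᵀP + PAᵀ(Bᵀ)⁻¹ = c • P`, then `c` is real and `A = (c/2) • B`. -/
theorem stmt0 (N : ℕ) (hN : 1 ≤ N)
    (P B A : Matrix (Fin N) (Fin N) ℂ)
    (hP : P.PosDef) (hB : B.PosDef) (hA : A.IsHermitian)
    (c : ℂ)
    (heq : Bᵀ⁻¹ * Aᵀ * P + P * Aᵀ * Bᵀ⁻¹ = c • P) :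
    c.im = 0 ∧ A = (c / 2) • B := by
  haveI : NeZero N := ⟨by omega⟩
  set H : Matrix (Fin N) (Fin N) ℂ := Bᵀ⁻¹ with hHdef
  have hBt : (Bᵀ).PosDef := hB.transpose
  have hH : H.PosDef := hBt.inv
  have hAt : (Aᵀ).IsHermitian := hA.transpose
  have hPne : P ≠ 0 := by
    intro h
    have := hP.det_pos
    rw [h, Matrix.det_zero] at this
    exact lt_irrefl 0 this
  -- c is real
  have hcc : star c = c := by
    have h1 := congrArg Matrix.conjTranspose heq
    rw [Matrix.conjTranspose_add, Matrix.conjTranspose_mul, Matrix.conjTranspose_mul,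
      Matrix.conjTranspose_mul, Matrix.conjTranspose_mul, hH.1.eq, hAt.eq, hP.1.eq,
      Matrix.conjTranspose_smul, hP.1.eq, ← Matrix.mul_assoc, ← Matrix.mul_assoc,
      add_comm, heq] at h1
    have h2 : (c - star c) • P = 0 := by
      rw [sub_smul, h1, sub_self]
    rcases smul_eq_zero.mp h2 with h3 | h3
    · linear_combination -h3
    · exact absurd h3 hPne
  have hcim : c.im = 0 := by
    have h4 := congrArg Complex.im hcc
    simp only [Complex.star_def, Complex.conj_im] at h4
    linarith
  refine ⟨hcim, ?_⟩
  have hc2 : star (c / 2) = c / 2 := by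
    rw [star_div₀, hcc]
    norm_num
  -- the matrix K
  set K : Matrix (Fin N) (Fin N) ℂ := Aᵀ - (c / 2) • Bᵀ with hKdef
  have hK : K.IsHermitian := by
    rw [Matrix.IsHermitian, hKdef, Matrix.conjTranspose_sub, hAt.eq,
      Matrix.conjTranspose_smul, hBt.1.eq, hc2]
  have hBtdet : IsUnit (Bᵀ).det := isUnit_iff_ne_zero.mpr (ne_of_gt hBt.det_pos)
  have hHBt : H * Bᵀ = 1 := Matrix.nonsing_inv_mul _ hBtdet
  have hBtH : Bᵀ * H = 1 := Matrix.mul_nonsing_inv _ hBtdet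
  -- key equation
  have hKey : H * K * P + P * K * H = 0 := by
    have e1 : H * K * P = H * Aᵀ * P - (c / 2) • P := by
      rw [hKdef, Matrix.mul_sub, Matrix.mul_smul, Matrix.sub_mul, Matrix.smul_mul, hHBt,
        Matrix.one_mul]
    have e2 : P * K * H = P * Aᵀ * H - (c / 2) • P := by
      rw [hKdef, Matrix.mul_sub, Matrix.mul_smul, Matrix.sub_mul, Matrix.smul_mul,
        Matrix.mul_assoc P Bᵀ H, hBtH, Matrix.mul_one]
    rw [e1, e2, sub_add_sub_comm, heq, ← add_smul]
    have : (c / 2 + c / 2 : ℂ) = c := by ring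
    rw [this, sub_self]
  -- trace argument
  have hanti : H * K * P = -(P * K * H) := by
    rw [eq_neg_iff_add_eq_zero]; exact hKey
  have htr1 : ((P * K * H) * K).trace = 0 := by
    have t2 : ((H * K) * (P * K)).trace = ((P * K) * (H * K)).trace :=
      Matrix.trace_mul_comm _ _
    have t5 : ((H * K * P) * K).trace = ((P * K * H) * K).trace := by
      rw [Matrix.mul_assoc (H * K) P K, t2, Matrix.mul_assoc (P * K) H K]
    rw [hanti, Matrix.neg_mul, Matrix.trace_neg] at t5
    have h6 : (2 : ℂ) * ((P * K * H) * K).trace = 0 := by linear_combination -t5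
    have h7 : (2 : ℂ) ≠ 0 := by norm_num
    exact (mul_eq_zero.mp h6).resolve_left h7
  have htr2 : ((H * K * P) * K).trace = 0 := by
    rw [hanti, Matrix.neg_mul, Matrix.trace_neg, htr1, neg_zero]
  -- square roots
  set R : Matrix (Fin N) (Fin N) ℂ := (open scoped MatrixOrder in CFC.sqrt H) with hRdef
  set Q : Matrix (Fin N) (Fin N) ℂ := (open scoped MatrixOrder in CFC.sqrt P) with hQdef
  have hRR : R * R = H := open scoped MatrixOrder in CFC.sqrt_mul_sqrt_self H hH.posSemidef.nonneg
  have hQQ : Q * Q = P := open scoped MatrixOrder in CFC.sqrt_mul_sqrt_self P hP.posSemidef.nonneg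
  have hRh : Rᴴ = R := open scoped MatrixOrder in (CFC.sqrt_nonneg H).posSemidef.1.eq
  have hQh : Qᴴ = Q := open scoped MatrixOrder in (CFC.sqrt_nonneg P).posSemidef.1.eq
  set M : Matrix (Fin N) (Fin N) ℂ := R * K * Q with hMdef
  have hMtr : (Mᴴ * M).trace = 0 := by
    have e : Mᴴ * M = Q * (K * (H * (K * Q))) := by
      simp only [hMdef, Matrix.conjTranspose_mul, hRh, hQh, hK.eq, Matrix.mul_assoc]
      rw [← Matrix.mul_assoc R R (K * Q), hRR]
    rw [e, Matrix.trace_mul_comm Q]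
    have e2 : K * (H * (K * Q)) * Q = K * (H * (K * P)) := by
      simp only [Matrix.mul_assoc]
      rw [hQQ]
    rw [e2, Matrix.trace_mul_comm K]
    simp only [Matrix.mul_assoc] at htr2 ⊢
    exact htr2
  have hM0 : M = 0 := trace_conjTranspose_mul_self_eq_zero' hMtr
  -- invertibility of R and Q
  have hRdet : IsUnit R.det := by
    have hd : R.det * R.det = H.det := by rw [← Matrix.det_mul, hRR]
    have hH0 : H.det ≠ 0 := ne_of_gt hH.det_pos
    refine isUnit_iff_ne_zero.mpr fun h => hH0 ?_
    rw [← hd, h, mul_zero]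
  have hQdet : IsUnit Q.det := by
    have hd : Q.det * Q.det = P.det := by rw [← Matrix.det_mul, hQQ]
    have hP0 : P.det ≠ 0 := ne_of_gt hP.det_pos
    refine isUnit_iff_ne_zero.mpr fun h => hP0 ?_
    rw [← hd, h, mul_zero]
  have hK0 : K = 0 := by
    have h1 : R⁻¹ * (R * K * Q) * Q⁻¹ = K := by
      simp only [Matrix.mul_assoc]
      rw [Matrix.mul_nonsing_inv _ hQdet, Matrix.mul_one, ← Matrix.mul_assoc,
        Matrix.nonsing_inv_mul _ hRdet, Matrix.one_mul]
    rw [← h1, ← hMdef, hM0, Matrix.mul_zero, Matrix.zero_mul]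
  -- conclude
  have hAt2 : Aᵀ = (c / 2) • Bᵀ := sub_eq_zero.mp hK0
  have hfin := congrArg Matrix.transpose hAt2
  rwa [Matrix.transpose_transpose, Matrix.transpose_smul, Matrix.transpose_transpose] at hfin
end

section
/- Let N ≥ 1 and let P be an N×N positive definite hermitian complex matrix. Define, for each N×N positive definite hermitian matrix B, the matrix Ψ₀(B) := (Bᵀ)⁻¹P(Bᵀ)⁻¹ / tr((Bᵀ)⁻¹P(Bᵀ)⁻¹). Then Ψ₀ is surjective onto the set of N×N positive definite hermitian matrices of trace 1: for every positive definite hermitian matrix G with tr(G) = 1, there exists a positive definite hermitian matrix B with Ψ₀(B) = G. -/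
open Matrix
open scoped ComplexOrder
open scoped MatrixOrder

private lemma posDef_of_posSemidef_isUnit {n : Type*} [Fintype n] [DecidableEq n]
    {M : Matrix n n ℂ} (hM : M.PosSemidef) (hdet : IsUnit M.det) : M.PosDef := by
  exact hM.posDef_iff_isUnit.mpr ((Matrix.isUnit_iff_isUnit_det M).mpr hdet)

private lemma posDef_conj {n : Type*} [Fintype n] [DecidableEq n]
    {A C : Matrix n n ℂ} (hA : A.PosDef) (hC : IsUnit C.det) :
    (Cᴴ * A * C).PosDef :=
  posDef_of_posSemidef_isUnit (hA.posSemidef.conjTranspose_mul_mul_same C)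
    (by simpa [Matrix.det_mul, Matrix.det_conjTranspose] using
      (hC.star.mul (hA.isUnit.map (Matrix.detMonoidHom))).mul hC)

/-- The map `Ψ₀(B) := (Bᵀ)⁻¹ P (Bᵀ)⁻¹ / tr((Bᵀ)⁻¹ P (Bᵀ)⁻¹)` is surjective onto the
positive definite hermitian matrices of trace 1. -/
theorem stmt2 (N : ℕ) (hN : 1 ≤ N)
    (P : Matrix (Fin N) (Fin N) ℂ) (hP : P.PosDef)
    (G : Matrix (Fin N) (Fin N) ℂ) (hG : G.PosDef) (hGtr : G.trace = 1) :
    ∃ B : Matrix (Fin N) (Fin N) ℂ, B.PosDef ∧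
      ((Bᵀ⁻¹ * P * Bᵀ⁻¹).trace)⁻¹ • (Bᵀ⁻¹ * P * Bᵀ⁻¹) = G := by
  classical
  set g := CFC.sqrt G with hgdef
  have hgg : g * g = G := CFC.sqrt_mul_sqrt_self G hG.posSemidef.nonneg
  have hgdet : IsUnit g.det := by
    have h1 : g.det * g.det = G.det := by rw [← Matrix.det_mul, hgg]
    have h2 : IsUnit (g.det * g.det) := by rw [h1]; exact hG.isUnit.map Matrix.detMonoidHom
    exact isUnit_of_mul_isUnit_left h2
  have hg : g.PosDef :=
    posDef_of_posSemidef_isUnit (CFC.sqrt_nonneg G).posSemidef hgdet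
  have hgH : gᴴ = g := (CFC.sqrt_nonneg G).posSemidef.1
  have hginv : g⁻¹ * g = 1 := Matrix.nonsing_inv_mul g hgdet
  have hginv' : g * g⁻¹ = 1 := Matrix.mul_nonsing_inv g hgdet
  -- Q := g P g is positive definite
  have hQ : (g * P * g).PosDef := by
    have := posDef_conj hP hgdet
    rwa [hgH] at this
  set S := CFC.sqrt (g * P * g) with hSdef
  have hSS : S * S = g * P * g := CFC.sqrt_mul_sqrt_self (g * P * g) hQ.posSemidef.nonneg
  have hSdet : IsUnit S.det := by
    have h1 : S.det * S.det = (g * P * g).det := by rw [← Matrix.det_mul, hSS]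
    have h2 : IsUnit (S.det * S.det) := by rw [h1]; exact hQ.isUnit.map Matrix.detMonoidHom
    exact isUnit_of_mul_isUnit_left h2
  have hS : S.PosDef := posDef_of_posSemidef_isUnit (CFC.sqrt_nonneg (g * P * g)).posSemidef hSdet
  set C := g⁻¹ * S * g⁻¹ with hCdef
  have hgiH : (g⁻¹)ᴴ = g⁻¹ := by rw [Matrix.conjTranspose_nonsing_inv, hgH]
  have hC : C.PosDef := by
    have := posDef_conj hS (Matrix.isUnit_nonsing_inv_det g hgdet)
    rwa [hgiH] at this
  have hCdet : IsUnit C.det := hC.isUnit.map Matrix.detMonoidHom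
  have hCinv : C⁻¹ * C = 1 := Matrix.nonsing_inv_mul C hCdet
  have hCinv' : C * C⁻¹ = 1 := Matrix.mul_nonsing_inv C hCdet
  -- key identity : C * G * C = P
  have hkey : C * G * C = P := by
    rw [hCdef, ← hgg]
    calc g⁻¹ * S * g⁻¹ * (g * g) * (g⁻¹ * S * g⁻¹)
        = g⁻¹ * (S * ((g⁻¹ * g) * (g * g⁻¹)) * S) * g⁻¹ := by noncomm_ring
      _ = g⁻¹ * (g * P * g) * g⁻¹ := by rw [hginv, hginv']; rw [mul_one, mul_one, hSS]
      _ = (g⁻¹ * g) * P * (g * g⁻¹) := by noncomm_ring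
      _ = P := by rw [hginv, hginv', one_mul, mul_one]
  refine ⟨Cᵀ, hC.transpose, ?_⟩
  have hBt : (Cᵀ)ᵀ = C := Matrix.transpose_transpose C
  rw [hBt]
  have hG' : C⁻¹ * P * C⁻¹ = G := by
    rw [← hkey]
    calc C⁻¹ * (C * G * C) * C⁻¹ = (C⁻¹ * C) * G * (C * C⁻¹) := by noncomm_ring
      _ = G := by rw [hCinv, hCinv', one_mul, mul_one]
  rw [hG', hGtr, inv_one, one_smul]
end

section
/- Let N ≥ 1 and let P be an N×N positive definite hermitian complex matrix. Define, for each N×N positive definite hermitian matrix B, the matrix Ψ₀(B) := (Bᵀ)⁻¹P(Bᵀ)⁻¹ / tr((Bᵀ)⁻¹P(Bᵀ)⁻¹). Then Ψ₀ is injective up to positive rescaling: if B and B′ are positive definite hermitian matrices with Ψ₀(B) = Ψ₀(B′), then there exists a real number α > 0 such that B′ = α·B. -/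
open Matrix
open scoped ComplexOrder
open scoped MatrixOrder

section Aux
variable {n : Type*} [Fintype n] [DecidableEq n]

lemma myPosDef_conj {A M : Matrix n n ℂ} (hA : A.PosDef) (hM : IsUnit M) :
    (Mᴴ * A * M).PosDef := by
  refine .of_dotProduct_mulVec_pos ?_ (fun x hx => ?_)
  · unfold Matrix.IsHermitian
    simp [conjTranspose_mul, hA.1.eq, Matrix.mul_assoc]
  · have hMx : M *ᵥ x ≠ 0 :=
      (Matrix.mulVec_injective_iff_isUnit.mpr hM).ne_iff' (by simp) |>.2 hx
    rw [Matrix.mul_assoc, ← Matrix.mulVec_mulVec, Matrix.dotProduct_mulVec,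
      ← star_mulVec, ← Matrix.mulVec_mulVec]
    exact hA.dotProduct_mulVec_pos hMx

lemma myTrace_pos [Nonempty n] {A : Matrix n n ℂ} (hA : A.PosDef) : 0 < A.trace := by
  rw [Matrix.trace]
  refine Finset.sum_pos (fun i _ => ?_) Finset.univ_nonempty
  have := hA.dotProduct_mulVec_pos (x := Pi.single i 1) (by simp [Function.ne_iff])
  simpa [Matrix.diag, mulVec_single, dotProduct, Pi.single_apply, star_one] using this

omit [DecidableEq n] in
lemma mySmul_posSemidef {c : ℝ} (hc : 0 ≤ c) {A : Matrix n n ℂ} (hA : A.PosSemidef) :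
    ((c : ℂ) • A).PosSemidef := by
  refine .of_dotProduct_mulVec_nonneg ?_ (fun x => ?_)
  · unfold Matrix.IsHermitian
    simp [hA.1.eq, Complex.conj_ofReal]
  · rw [smul_mulVec, dotProduct_smul]
    calc (0:ℂ) = (c:ℂ) • 0 := by simp
    _ ≤ (c:ℂ) • (star x ⬝ᵥ A *ᵥ x) :=
        smul_le_smul_of_nonneg_left (hA.dotProduct_mulVec_nonneg x) (by exact_mod_cast hc)
end Aux

/-- The map `Ψ₀(B) := (Bᵀ)⁻¹ P (Bᵀ)⁻¹ / tr((Bᵀ)⁻¹ P (Bᵀ)⁻¹)` is injective up to positive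
rescaling: if `Ψ₀(B) = Ψ₀(B')` for positive definite hermitian `B, B'`, then `B' = α • B`
for some real `α > 0`. -/
theorem stmt3 (N : ℕ) (hN : 1 ≤ N)
    (P : Matrix (Fin N) (Fin N) ℂ) (hP : P.PosDef)
    (B B' : Matrix (Fin N) (Fin N) ℂ) (hB : B.PosDef) (hB' : B'.PosDef)
    (h : ((Bᵀ⁻¹ * P * Bᵀ⁻¹).trace)⁻¹ • (Bᵀ⁻¹ * P * Bᵀ⁻¹)
       = ((B'ᵀ⁻¹ * P * B'ᵀ⁻¹).trace)⁻¹ • (B'ᵀ⁻¹ * P * B'ᵀ⁻¹)) :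
    ∃ α : ℝ, 0 < α ∧ B' = (α : ℂ) • B := by
  haveI : Nonempty (Fin N) := Fin.pos_iff_nonempty.mp hN
  set A := Bᵀ with hAdef
  set A' := B'ᵀ with hA'def
  have hA : A.PosDef := hB.transpose
  have hA' : A'.PosDef := hB'.transpose
  haveI := hA.isUnit.invertible
  haveI := hA'.isUnit.invertible
  have hQ : (A⁻¹ * P * A⁻¹).PosDef := by
    have := myPosDef_conj hP hA.inv.isUnit
    rwa [hA.isHermitian.inv.eq] at this
  have hQ' : (A'⁻¹ * P * A'⁻¹).PosDef := by
    have := myPosDef_conj hP hA'.inv.isUnit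
    rwa [hA'.isHermitian.inv.eq] at this
  set t := (A⁻¹ * P * A⁻¹).trace with htdef
  set t' := (A'⁻¹ * P * A'⁻¹).trace with ht'def
  have ht : 0 < t := myTrace_pos hQ
  have ht' : 0 < t' := myTrace_pos hQ'
  -- the positive real ratio
  set ce : ℝ := t'.re / t.re with hcedef
  have htre : 0 < t.re := (Complex.lt_def.mp ht).1
  have ht're : 0 < t'.re := (Complex.lt_def.mp ht').1
  have hce : 0 < ce := div_pos ht're htre
  have htC : t = ((t.re : ℝ) : ℂ) := Complex.ext rfl (by simpa using ((Complex.lt_def.mp ht).2).symm)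
  have ht'C : t' = ((t'.re : ℝ) : ℂ) := Complex.ext rfl (by simpa using ((Complex.lt_def.mp ht').2).symm)
  have hc : A'⁻¹ * P * A'⁻¹ = (ce : ℂ) • (A⁻¹ * P * A⁻¹) := by
    have h1 : (A'⁻¹ * P * A'⁻¹) = t' • (t'⁻¹ • (A'⁻¹ * P * A'⁻¹)) := by
      rw [smul_smul, mul_inv_cancel₀ ht'.ne', one_smul]
    rw [h1, ← h, smul_smul]
    congr 1
    rw [htC, ht'C, hcedef]
    push_cast [div_eq_mul_inv]
    ring
  -- key identity
  have hkey : A' * A⁻¹ * P * A⁻¹ * A' = ((ce : ℂ))⁻¹ • P := by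
    have := congrArg (fun M => ((ce:ℂ))⁻¹ • (A' * M * A')) hc
    simp only [Matrix.mul_smul, Matrix.smul_mul, smul_smul] at this
    rw [inv_mul_cancel₀ (by exact_mod_cast hce.ne'), one_smul] at this
    calc A' * A⁻¹ * P * A⁻¹ * A'
        = A' * (A⁻¹ * P * A⁻¹) * A' := by simp only [Matrix.mul_assoc]
      _ = ((ce:ℂ))⁻¹ • (A' * (A'⁻¹ * P * A'⁻¹) * A') := this.symm
      _ = ((ce:ℂ))⁻¹ • P := by
          congr 1
          calc A' * (A'⁻¹ * P * A'⁻¹) * A'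
              = A' * (A'⁻¹ * (P * (A'⁻¹ * A'))) := by simp only [Matrix.mul_assoc]
            _ = P := by
                rw [Matrix.inv_mul_of_invertible, Matrix.mul_one,
                  Matrix.mul_inv_cancel_left_of_invertible]
  -- square root of A
  set S := CFC.sqrt A with hSdef
  have hS1 : S * S = A := CFC.sqrt_mul_sqrt_self A hA.posSemidef.nonneg
  have hSh : S.IsHermitian := (Matrix.nonneg_iff_posSemidef.mp (CFC.sqrt_nonneg A)).1
  haveI : Invertible S := by
    apply Matrix.invertibleOfIsUnitDet
    have : S.det * S.det = A.det := by rw [← Matrix.det_mul, hS1]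
    have hAd := hA.det_pos.ne'
    exact (IsUnit.mul_iff.mp (this ▸ hAd.isUnit)).1
  have hSinv_h : (S⁻¹)ᴴ = S⁻¹ := hSh.inv.eq
  have hAinv : A⁻¹ = S⁻¹ * S⁻¹ := by rw [← hS1, Matrix.mul_inv_rev]
  set Z := S⁻¹ * A' * S⁻¹ with hZdef
  have hSu : IsUnit (S⁻¹) := (Matrix.isUnit_nonsing_inv_iff).mpr (isUnit_of_invertible S)
  have hZps : Z.PosSemidef := by
    have := myPosDef_conj hA' hSu
    exact (hSinv_h ▸ this).posSemidef
  have hA'Z : A' = S * Z * S := by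
    rw [hZdef]
    calc A' = S * (S⁻¹ * (A' * S⁻¹)) * S := by
          rw [Matrix.mul_inv_cancel_left_of_invertible, Matrix.inv_mul_cancel_right_of_invertible]
      _ = S * (S⁻¹ * A' * S⁻¹) * S := by simp only [Matrix.mul_assoc]
  set G := S⁻¹ * P * S⁻¹ with hGdef
  have hG : G.PosDef := by
    have := myPosDef_conj hP hSu
    rwa [hSinv_h] at this
  have hZGZ : Z * G * Z = ((ce : ℂ))⁻¹ • G := by
    have e : Z * G * Z = S⁻¹ * (A' * A⁻¹ * P * A⁻¹ * A') * S⁻¹ := by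
      rw [hZdef, hGdef, hAinv]
      simp only [Matrix.mul_assoc]
    rw [e, hkey]
    simp only [Matrix.mul_smul, Matrix.smul_mul, hGdef, Matrix.mul_assoc]
  -- rescale
  set a : ℝ := Real.sqrt ce with hadef
  have ha : 0 < a := Real.sqrt_pos.mpr hce
  set Y := (a : ℂ) • Z with hYdef
  have hYGY : Y * G * Y = G := by
    rw [hYdef]
    simp only [Matrix.smul_mul, Matrix.mul_smul, smul_smul, hZGZ]
    have e : (a:ℂ) * ((a:ℂ) * ((ce:ℂ))⁻¹) = 1 := by
      rw [← mul_assoc, ← Complex.ofReal_mul, Real.mul_self_sqrt hce.le,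
        mul_inv_cancel₀ (by exact_mod_cast hce.ne')]
    rw [e, one_smul]
  -- square root of G
  set R := CFC.sqrt G with hRdef
  have hR1 : R * R = G := CFC.sqrt_mul_sqrt_self G hG.posSemidef.nonneg
  have hRh : R.IsHermitian := (Matrix.nonneg_iff_posSemidef.mp (CFC.sqrt_nonneg G)).1
  haveI : Invertible R := by
    apply Matrix.invertibleOfIsUnitDet
    have : R.det * R.det = G.det := by rw [← Matrix.det_mul, hR1]
    exact (IsUnit.mul_iff.mp (this ▸ hG.det_pos.ne'.isUnit)).1
  have hHps : (R * Y * R).PosSemidef := by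
    have := mySmul_posSemidef (c := a) ha.le (hZps.conjTranspose_mul_mul_same R)
    rw [hRh.eq] at this
    have e : R * Y * R = (a:ℂ) • (R * Z * R) := by
      rw [hYdef]; simp only [Matrix.smul_mul, Matrix.mul_smul]
    rwa [e]
  have hH2 : (R * Y * R) ^ 2 = G ^ 2 := by
    rw [sq, sq, ← hR1]
    calc R * Y * R * (R * Y * R) = R * (Y * (R * R) * Y) * R := by simp only [Matrix.mul_assoc]
      _ = R * (R * R) * R := by rw [hR1, hYGY]
      _ = R * R * (R * R) := by simp only [Matrix.mul_assoc]
  have hHG : R * Y * R = G := (CFC.sq_eq_sq_iff _ _ hHps.nonneg hG.posSemidef.nonneg).mp hH2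
  have hY1 : Y = 1 := by
    calc Y = Y * R * R⁻¹ := by rw [Matrix.mul_inv_cancel_right_of_invertible]
      _ = R⁻¹ * (R * (Y * R)) * R⁻¹ := by rw [Matrix.inv_mul_cancel_left_of_invertible]
      _ = R⁻¹ * (R * Y * R) * R⁻¹ := by rw [Matrix.mul_assoc R Y R]
      _ = R⁻¹ * (R * R) * R⁻¹ := by rw [hHG, ← hR1]
      _ = 1 := by rw [Matrix.inv_mul_cancel_left_of_invertible, Matrix.mul_inv_of_invertible]
  refine ⟨a⁻¹, inv_pos.mpr ha, ?_⟩
  have hZ1 : Z = ((a⁻¹ : ℝ) : ℂ) • (1 : Matrix (Fin N) (Fin N) ℂ) := by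
    have := congrArg (fun M => ((a:ℂ))⁻¹ • M) hY1
    simp only [hYdef, smul_smul] at this
    rw [inv_mul_cancel₀ (by exact_mod_cast ha.ne'), one_smul] at this
    rw [this]
    push_cast
    ring_nf
  have hA'eq : A' = ((a⁻¹ : ℝ) : ℂ) • A := by
    rw [hA'Z, hZ1, ← hS1]
    simp only [Matrix.mul_smul, Matrix.smul_mul, Matrix.mul_one]
  have := congrArg Matrix.transpose hA'eq
  rwa [hA'def, hAdef, transpose_transpose, transpose_smul, transpose_transpose] at this
end

section
/- Let N ≥ 1, let P be an N×N positive definite hermitian complex matrix, and define Ψ₀(B) := (Bᵀ)⁻¹P(Bᵀ)⁻¹ / tr((Bᵀ)⁻¹P(Bᵀ)⁻¹) for positive definite hermitian B. Let B be positive definite hermitian and A hermitian. Then the map t ↦ Ψ₀(B + tA), defined for real t near 0 (where B + tA is still positive definite), is differentiable at t = 0, with derivative − (Bᵀ)⁻¹AᵀΨ₀(B) − Ψ₀(B)Aᵀ(Bᵀ)⁻¹ + tr((Bᵀ)⁻¹AᵀΨ₀(B) + Ψ₀(B)Aᵀ(Bᵀ)⁻¹) · Ψ₀(B). -/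
open Matrix
open scoped ComplexOrder

attribute [local instance] Matrix.frobeniusNormedAddCommGroup Matrix.frobeniusNormedSpace
attribute [local instance] Matrix.frobeniusNormedRing Matrix.frobeniusNormedAlgebra

lemma aux_trace_pos {N : ℕ} (hN : 1 ≤ N) {M : Matrix (Fin N) (Fin N) ℂ} (hM : M.PosDef) :
    0 < M.trace := by
  rw [Matrix.trace]
  have hpos : ∀ i, 0 < M.diag i := by
    intro i
    exact hM.diag_pos
  haveI : Nonempty (Fin N) := ⟨⟨0, hN⟩⟩
  exact Finset.sum_pos (fun i _ => hpos i) Finset.univ_nonempty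

lemma aux_conj_posDef {N : ℕ} {P C : Matrix (Fin N) (Fin N) ℂ} (hP : P.PosDef) (hC : IsUnit C) :
    (Cᴴ * P * C).PosDef := by
  refine Matrix.PosDef.of_dotProduct_mulVec_pos ?_ ?_
  · exact Matrix.isHermitian_conjTranspose_mul_mul C hP.1
  · intro x hx
    have hx' : C *ᵥ x ≠ 0 := by
      have hinj := Matrix.mulVec_injective_iff_isUnit.mpr hC
      intro h
      exact hx (hinj (by simp [h]))
    simpa only [star_mulVec, dotProduct_mulVec, vecMul_vecMul] using hP.dotProduct_mulVec_pos hx'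


/-- The map `Ψ₀(B) := (Bᵀ)⁻¹ P (Bᵀ)⁻¹ / tr((Bᵀ)⁻¹ P (Bᵀ)⁻¹)` on positive definite hermitian
matrices. -/
noncomputable def Psi₀ {N : ℕ} (P B : Matrix (Fin N) (Fin N) ℂ) : Matrix (Fin N) (Fin N) ℂ :=
  ((Bᵀ⁻¹ * P * Bᵀ⁻¹).trace)⁻¹ • (Bᵀ⁻¹ * P * Bᵀ⁻¹)

/-- The linearisation of `Ψ₀` at a positive definite hermitian matrix `B` in a hermitian
direction `A`: the map `t ↦ Ψ₀(B + tA)` is differentiable at `t = 0` with derivative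
`−(Bᵀ)⁻¹AᵀΨ₀(B) − Ψ₀(B)Aᵀ(Bᵀ)⁻¹ + tr((Bᵀ)⁻¹AᵀΨ₀(B) + Ψ₀(B)Aᵀ(Bᵀ)⁻¹) • Ψ₀(B)`. -/
theorem stmt5 (N : ℕ) (hN : 1 ≤ N)
    (P : Matrix (Fin N) (Fin N) ℂ) (hP : P.PosDef)
    (B A : Matrix (Fin N) (Fin N) ℂ) (hB : B.PosDef) (hA : A.IsHermitian) :
    HasDerivAt (fun t : ℝ => Psi₀ P (B + t • A))
      (- (Bᵀ⁻¹ * Aᵀ * Psi₀ P B) - Psi₀ P B * Aᵀ * Bᵀ⁻¹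
        + ((Bᵀ⁻¹ * Aᵀ * Psi₀ P B + Psi₀ P B * Aᵀ * Bᵀ⁻¹).trace) • Psi₀ P B)
      0 := by
  haveI : CompleteSpace (Matrix (Fin N) (Fin N) ℂ) := FiniteDimensional.complete ℝ _
  have hBt : Bᵀ.PosDef := hB.transpose
  have hu : IsUnit Bᵀ := hBt.isUnit
  set M : Matrix (Fin N) (Fin N) ℂ := Bᵀ⁻¹ * P * Bᵀ⁻¹ with hMdef
  have hMpd : M.PosDef := by
    have h1 : (Bᵀ⁻¹ᴴ * P * Bᵀ⁻¹).PosDef := aux_conj_posDef hP (Matrix.isUnit_nonsing_inv_iff.mpr hu)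
    rwa [hBt.inv.isHermitian.eq] at h1
  set c : ℂ := M.trace with hcdef
  have hc : c ≠ 0 := (aux_trace_pos hN hMpd).ne'
  -- the inverse map, as Ring.inverse
  set G : ℝ → Matrix (Fin N) (Fin N) ℂ :=
    fun t => Ring.inverse ((B + t • A)ᵀ) * P * Ring.inverse ((B + t • A)ᵀ) with hGdef
  have hfun : (fun t : ℝ => Psi₀ P (B + t • A)) = fun t => ((G t).trace)⁻¹ • G t := by
    funext t
    simp only [Psi₀, hGdef, Matrix.nonsing_inv_eq_ringInverse]
  -- derivative of the ring inverse
  have hinv : HasDerivAt (fun t : ℝ => Ring.inverse ((B + t • A)ᵀ)) (-(Bᵀ⁻¹ * Aᵀ * Bᵀ⁻¹)) 0 := by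
    have hui : (↑hu.unit⁻¹ : Matrix (Fin N) (Fin N) ℂ) = Bᵀ⁻¹ := by
      rw [Matrix.nonsing_inv_eq_ringInverse, ← Ring.inverse_unit hu.unit, hu.unit_spec]
    have h1 : HasDerivAt (fun t : ℝ => (B + t • A)ᵀ) Aᵀ 0 := by
      have he : (fun t : ℝ => (B + t • A)ᵀ) = fun t : ℝ => Bᵀ + t • Aᵀ := by
        funext t; simp [Matrix.transpose_add, Matrix.transpose_smul]
      rw [he]
      exact (((hasDerivAt_id (0:ℝ)).smul_const Aᵀ).const_add Bᵀ).congr_deriv (one_smul ℝ Aᵀ)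
    have hpt : HasFDerivAt Ring.inverse
        (-((ContinuousLinearMap.mulLeftRight ℝ (Matrix (Fin N) (Fin N) ℂ)) ↑hu.unit⁻¹) ↑hu.unit⁻¹)
        ((B + (0:ℝ) • A)ᵀ) := by
      have h := hasFDerivAt_ringInverse (𝕜 := ℝ) hu.unit
      rw [hu.unit_spec] at h
      rw [show ((B + (0:ℝ) • A)ᵀ : Matrix (Fin N) (Fin N) ℂ) = Bᵀ by simp]
      exact h
    have h2 := hpt.comp_hasDerivAt 0 h1
    simp [hui, ContinuousLinearMap.mulLeftRight_apply, mul_assoc, Function.comp_def] at h2 ⊢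
    exact h2
  -- derivative of G
  have hrinv0 : Ring.inverse ((B + (0:ℝ) • A)ᵀ) = Bᵀ⁻¹ := by
    rw [show ((B + (0:ℝ) • A)ᵀ : Matrix (Fin N) (Fin N) ℂ) = Bᵀ by simp,
      ← Matrix.nonsing_inv_eq_ringInverse]
  have hG : HasDerivAt G (-(Bᵀ⁻¹ * Aᵀ * M) - M * Aᵀ * Bᵀ⁻¹) 0 := by
    have h := (hinv.mul_const P).mul hinv
    rw [hrinv0] at h
    refine h.congr_deriv ?_
    simp only [hMdef]
    noncomm_ring
  -- derivative of the trace
  have htr : HasDerivAt (fun t => (G t).trace)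
      ((-(Bᵀ⁻¹ * Aᵀ * M) - M * Aᵀ * Bᵀ⁻¹).trace) 0 := by
    let T : Matrix (Fin N) (Fin N) ℂ →L[ℝ] ℂ :=
      LinearMap.toContinuousLinearMap
        ((Matrix.traceLinearMap (Fin N) ℂ ℂ).restrictScalars ℝ)
    have h := (T.hasFDerivAt (x := G 0)).comp_hasDerivAt 0 hG
    simp [T, Function.comp_def] at h ⊢
    exact h.congr_deriv (by change Matrix.trace (-(Bᵀ⁻¹ * Aᵀ * M) - M * Aᵀ * Bᵀ⁻¹) = _; simp)
  have hGM : G 0 = M := by rw [hGdef]; simp only [hrinv0, hMdef]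
  have hG0 : (G 0).trace = c := by rw [hGM]
  -- derivative of inverse trace
  have hitr : HasDerivAt (fun t => ((G t).trace)⁻¹)
      ((-(Bᵀ⁻¹ * Aᵀ * M) - M * Aᵀ * Bᵀ⁻¹).trace * -(c ^ 2)⁻¹) 0 := by
    have hne : (G 0).trace ≠ 0 := by rw [hG0]; exact hc
    have h := ((hasDerivAt_inv hne).hasFDerivAt.restrictScalars ℝ).comp_hasDerivAt 0 htr
    simpa [hG0, Function.comp_def] using h
  have main := hitr.smul hG
  rw [hGM] at main
  rw [hfun]
  refine main.congr_deriv ?_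
  simp only [Psi₀, ← hMdef, ← hcdef, Matrix.mul_smul, Matrix.smul_mul, Matrix.trace_smul,
    Matrix.trace_add, Matrix.trace_sub, Matrix.trace_neg, smul_eq_mul]
  set x : ℂ := (Bᵀ⁻¹ * Aᵀ * M).trace with hx
  set y : ℂ := (M * Aᵀ * Bᵀ⁻¹).trace with hy
  match_scalars <;> field_simp <;> ring
end

section
/- Let N ≥ 4 be a natural number and ε ≥ 0 a real number with N^{3/2}·ε ≤ 1/4. Let Λ be an invertible N×N complex matrix with ‖Λ⁻¹‖ₒₚ ≤ 2, let F be an N×N complex matrix with |Fᵢⱼ| ≤ ε for all i, j, and let d₁, …, d_N be positive real numbers such that Λ applied to the vector (d₁^{−2}, …, d_N^{−2}) equals (Λ + F)𝟙, where 𝟙 ∈ ℂᴺ has all entries 1. Then for every i, |dᵢ² − 1| ≤ 2·N²·ε; equivalently, the diagonal matrix D = diag(d₁², …, d_N²) satisfies ‖D − I‖ₒₚ ≤ 2·N²·ε. -/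
open Matrix
open scoped Matrix.Norms.L2Operator

lemma aux_diag_norm {N : ℕ} (v : Fin N → ℂ) (C : ℝ) (hC : 0 ≤ C)
    (h : ∀ i, ‖v i‖ ≤ C) : ‖Matrix.diagonal v‖ ≤ C := by
  rw [Matrix.l2_opNorm_def]
  refine ContinuousLinearMap.opNorm_le_bound _ hC ?_
  intro x
  have hval : ((Matrix.toEuclideanLin.trans LinearMap.toContinuousLinearMap)
      (Matrix.diagonal v)) x = (EuclideanSpace.equiv (Fin N) ℂ).symm
        (Matrix.diagonal v *ᵥ x) := rfl
  rw [hval, EuclideanSpace.norm_eq]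
  have hx : ‖x‖ = Real.sqrt (∑ i, ‖x i‖ ^ 2) := EuclideanSpace.norm_eq x
  rw [hx]
  have h1 : ∀ i : Fin N, ‖((EuclideanSpace.equiv (Fin N) ℂ).symm
      (Matrix.diagonal v *ᵥ x)) i‖ ^ 2 ≤ C ^ 2 * ‖x i‖ ^ 2 := by
    intro i
    have he : ((EuclideanSpace.equiv (Fin N) ℂ).symm
        (Matrix.diagonal v *ᵥ x)) i = v i * x i := by
      simp [Matrix.mulVec_diagonal]
    rw [he, norm_mul, mul_pow]
    exact mul_le_mul_of_nonneg_right (pow_le_pow_left₀ (norm_nonneg _) (h i) 2) (sq_nonneg _)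
  calc Real.sqrt (∑ i, ‖((EuclideanSpace.equiv (Fin N) ℂ).symm
        (Matrix.diagonal v *ᵥ x)) i‖ ^ 2)
      ≤ Real.sqrt (∑ i, C ^ 2 * ‖x i‖ ^ 2) := by
        apply Real.sqrt_le_sqrt; exact Finset.sum_le_sum fun i _ => h1 i
    _ = C * Real.sqrt (∑ i, ‖x i‖ ^ 2) := by
        rw [← Finset.mul_sum, Real.sqrt_mul (sq_nonneg C), Real.sqrt_sq hC]

lemma aux_entry_le {N : ℕ} (y : Fin N → ℂ) (i : Fin N) :
    ‖y i‖ ≤ ‖(EuclideanSpace.equiv (Fin N) ℂ).symm y‖ := by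
  rw [EuclideanSpace.norm_eq]
  have h0 : ‖y i‖ = Real.sqrt (‖y i‖ ^ 2) := (Real.sqrt_sq (norm_nonneg _)).symm
  rw [h0]
  apply Real.sqrt_le_sqrt
  exact Finset.single_le_sum
    (f := fun j => ‖((EuclideanSpace.equiv (Fin N) ℂ).symm y) j‖ ^ 2)
    (fun j _ => sq_nonneg _) (Finset.mem_univ i)

/-- The matrix-theoretic core of the quantitative injectivity of the Fubini–Study map:
if `N ≥ 4`, `N^{3/2}·ε ≤ 1/4`, `Λ` is invertible with `‖Λ⁻¹‖ₒₚ ≤ 2`, the entries of `F`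
have modulus at most `ε`, and `Λ(d₁⁻², …, d_N⁻²) = (Λ + F)𝟙` for positive reals `dᵢ`,
then `|dᵢ² − 1| ≤ 2·N²·ε` for all `i`; equivalently the diagonal matrix
`D = diag(d₁², …, d_N²)` satisfies `‖D − I‖ₒₚ ≤ 2·N²·ε`. -/
theorem stmt9 (N : ℕ) (hN : 4 ≤ N) (ε : ℝ) (hε : 0 ≤ ε)
    (hNε : (N : ℝ) ^ ((3 : ℝ) / 2) * ε ≤ 1 / 4)
    (Λ F : Matrix (Fin N) (Fin N) ℂ) (hΛ : IsUnit Λ) (hΛinv : ‖Λ⁻¹‖ ≤ 2)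
    (hF : ∀ i j, ‖F i j‖ ≤ ε)
    (d : Fin N → ℝ) (hd : ∀ i, 0 < d i)
    (hv : Λ *ᵥ (fun i => (((d i : ℂ)) ^ 2)⁻¹) = (Λ + F) *ᵥ (fun _ => 1)) :
    (∀ i, |d i ^ 2 - 1| ≤ 2 * (N : ℝ) ^ 2 * ε) ∧
      ‖Matrix.diagonal (fun i => ((d i : ℂ)) ^ 2) - 1‖ ≤ 2 * (N : ℝ) ^ 2 * ε := by
  have hNpos : (0 : ℝ) < N := by positivity
  have hsqrtN : (N : ℝ) ^ ((3 : ℝ) / 2) = Real.sqrt N * N := by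
    rw [Real.sqrt_eq_rpow, show (3 : ℝ) / 2 = 1 / 2 + 1 by norm_num,
      Real.rpow_add hNpos, Real.rpow_one]
  set x : Fin N → ℂ := fun i => (((d i : ℂ)) ^ 2)⁻¹ with hxdef
  have hdet : IsUnit Λ.det := (Matrix.isUnit_iff_isUnit_det Λ).mp hΛ
  have hkey : (fun i => x i - 1) = Λ⁻¹ *ᵥ (F *ᵥ (fun _ => 1)) := by
    have h1 : Λ *ᵥ (x - fun _ => 1) = F *ᵥ (fun _ => 1) := by
      rw [Matrix.mulVec_sub, hv, Matrix.add_mulVec]; abel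
    show x - (fun _ => 1) = _
    calc x - (fun _ => 1) = (Λ⁻¹ * Λ) *ᵥ (x - fun _ => 1) := by
          rw [Matrix.nonsing_inv_mul Λ hdet, Matrix.one_mulVec]
      _ = Λ⁻¹ *ᵥ (Λ *ᵥ (x - fun _ => 1)) := (Matrix.mulVec_mulVec _ _ _).symm
      _ = Λ⁻¹ *ᵥ (F *ᵥ (fun _ => 1)) := by rw [h1]
  have hF1 : ‖(EuclideanSpace.equiv (Fin N) ℂ).symm (F *ᵥ (fun _ => 1))‖
      ≤ Real.sqrt N * (N * ε) := by
    rw [EuclideanSpace.norm_eq]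
    have hentry : ∀ i, ‖((EuclideanSpace.equiv (Fin N) ℂ).symm
        (F *ᵥ (fun _ => 1))) i‖ ≤ N * ε := by
      intro i
      have he : ((EuclideanSpace.equiv (Fin N) ℂ).symm (F *ᵥ (fun _ => 1))) i
          = ∑ j, F i j := by simp [Matrix.mulVec, dotProduct]
      rw [he]
      calc ‖∑ j, F i j‖ ≤ ∑ j : Fin N, ε :=
            (norm_sum_le _ _).trans (Finset.sum_le_sum fun j _ => hF i j)
        _ = N * ε := by simp [mul_comm]
    calc Real.sqrt (∑ i, ‖((EuclideanSpace.equiv (Fin N) ℂ).symm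
          (F *ᵥ (fun _ => 1))) i‖ ^ 2)
        ≤ Real.sqrt (∑ _i : Fin N, (N * ε) ^ 2) := by
          apply Real.sqrt_le_sqrt
          refine Finset.sum_le_sum fun i _ => ?_
          have h2 := hentry i
          have h0 : (0:ℝ) ≤ ‖((EuclideanSpace.equiv (Fin N) ℂ).symm
            (F *ᵥ (fun _ => 1))) i‖ := norm_nonneg _
          nlinarith
      _ = Real.sqrt N * (N * ε) := by
          rw [Finset.sum_const, Finset.card_univ, Fintype.card_fin, nsmul_eq_mul,
            Real.sqrt_mul (le_of_lt hNpos), Real.sqrt_sq (by positivity)]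
  have hδ : ∀ i, ‖x i - 1‖ ≤ 2 * ((N : ℝ) ^ ((3 : ℝ) / 2) * ε) := by
    intro i
    have h1 : ‖x i - 1‖ ≤ ‖(EuclideanSpace.equiv (Fin N) ℂ).symm
        (fun j => x j - 1)‖ := aux_entry_le (fun j => x j - 1) i
    have h2 : ‖(EuclideanSpace.equiv (Fin N) ℂ).symm (fun j => x j - 1)‖
        ≤ ‖Λ⁻¹‖ * ‖(EuclideanSpace.equiv (Fin N) ℂ).symm (F *ᵥ (fun _ => 1))‖ := by
      rw [hkey]
      exact Matrix.l2_opNorm_mulVec Λ⁻¹ ((EuclideanSpace.equiv (Fin N) ℂ).symm _)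
    have h3 : ‖Λ⁻¹‖ * ‖(EuclideanSpace.equiv (Fin N) ℂ).symm (F *ᵥ (fun _ => 1))‖
        ≤ 2 * (Real.sqrt N * (N * ε)) :=
      mul_le_mul hΛinv hF1 (norm_nonneg _) (by norm_num)
    calc ‖x i - 1‖ ≤ 2 * (Real.sqrt N * (N * ε)) := h1.trans (h2.trans h3)
      _ = 2 * ((N : ℝ) ^ ((3 : ℝ) / 2) * ε) := by rw [hsqrtN]; ring
  have hmain : ∀ i, |d i ^ 2 - 1| ≤ 2 * (N : ℝ) ^ 2 * ε := by
    intro i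
    set t : ℝ := d i ^ 2 with ht
    have htpos : 0 < t := by rw [ht]; exact pow_pos (hd i) 2
    have hcast : x i - 1 = ((t⁻¹ - 1 : ℝ) : ℂ) := by
      show (((d i : ℂ)) ^ 2)⁻¹ - 1 = _
      rw [ht]; push_cast; ring
    have habs : |t⁻¹ - 1| ≤ 2 * ((N : ℝ) ^ ((3 : ℝ) / 2) * ε) := by
      have h := hδ i
      rw [hcast, Complex.norm_real, Real.norm_eq_abs] at h
      exact h
    have hhalf : |t⁻¹ - 1| ≤ 1 / 2 := habs.trans (by nlinarith)
    have htinv : (1:ℝ)/2 ≤ t⁻¹ := by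
      have h := abs_le.mp hhalf
      linarith [h.1]
    have ht2 : t ≤ 2 := by
      rw [← inv_inv t, show (2:ℝ) = (1/2 : ℝ)⁻¹ by norm_num]
      exact inv_anti₀ (by norm_num) htinv
    have heq : |t - 1| = t * |t⁻¹ - 1| := by
      have hm : t * |t⁻¹ - 1| = |t * (t⁻¹ - 1)| := by rw [abs_mul, abs_of_pos htpos]
      rw [hm, mul_sub, mul_inv_cancel₀ htpos.ne', mul_one, abs_sub_comm]
    have hN32 : 2 * (N : ℝ) ^ ((3 : ℝ) / 2) ≤ (N : ℝ) ^ 2 := by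
      have h4 : (4 : ℝ) ≤ N := by exact_mod_cast hN
      have hs : 2 ≤ Real.sqrt N := by
        rw [show (2:ℝ) = Real.sqrt 4 by
          rw [show (4:ℝ) = 2^2 by norm_num, Real.sqrt_sq]; norm_num]
        exact Real.sqrt_le_sqrt h4
      have hsq : Real.sqrt N * Real.sqrt N = N := Real.mul_self_sqrt hNpos.le
      have hNN : (N:ℝ)^2 = Real.sqrt N * ((N:ℝ) ^ ((3:ℝ)/2)) := by
        rw [hsqrtN]; nlinarith
      rw [hNN]
      have hpow : (0:ℝ) ≤ (N : ℝ) ^ ((3:ℝ)/2) := Real.rpow_nonneg hNpos.le _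
      nlinarith
    calc |t - 1| = t * |t⁻¹ - 1| := heq
      _ ≤ 2 * (2 * ((N : ℝ) ^ ((3 : ℝ) / 2) * ε)) :=
          mul_le_mul ht2 habs (abs_nonneg _) (by norm_num)
      _ ≤ 2 * (N : ℝ) ^ 2 * ε := by nlinarith [hN32]
  refine ⟨hmain, ?_⟩
  have hdiag : Matrix.diagonal (fun i => ((d i : ℂ)) ^ 2) - 1
      = Matrix.diagonal (fun i => ((d i : ℂ)) ^ 2 - 1) := by
    rw [← Matrix.diagonal_one, Matrix.diagonal_sub]
  rw [hdiag]
  apply aux_diag_norm _ _ (by positivity)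
  intro i
  have hc : ((d i : ℂ)) ^ 2 - 1 = ((d i ^ 2 - 1 : ℝ) : ℂ) := by push_cast; ring
  rw [hc, Complex.norm_real, Real.norm_eq_abs]
  exact hmain i
end
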